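/- arXiv:0906.3724 — 2 statements merged into one kernel-verified Lean document; each statement's English description precedes it below -/
import Mathlib

section
/- Let G be an ordered graph on [n] and let A ⊆ [n]. Then the number of distinct ordered graphs of the form G − a with a ∈ A satisfies |{G − a : a ∈ A}| ≥ (|A| − m(G))/2. -/
namespace OrderedGraphs

/-- The order-preserving map `Fin (n-1) → Fin n` that skips the vertex `v`. -/
def delMap {n : ℕ} (v : Fin n) (i : Fin (n - 1)) : Fin n :=
  if h : (i : ℕ) < (v : ℕ) then ⟨i, lt_trans h v.isLt⟩
  else ⟨(i : ℕ) + 1, by have h1 := i.isLt; have h2 := v.isLt; omega⟩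

/-- `erase G v` is the ordered graph `G − v` on `[n-1]`, obtained by deleting `v` and
relabelling the remaining vertices order-preservingly. -/
def erase {n : ℕ} (G : SimpleGraph (Fin n)) (v : Fin n) : SimpleGraph (Fin (n - 1)) where
  Adj i j := G.Adj (delMap v i) (delMap v j)
  symm := ⟨fun i j h => G.adj_symm h⟩
  loopless := ⟨fun i h => G.irrefl h⟩

/-- The shadow `∂G` of a single ordered graph. -/
def shadow {n : ℕ} (G : SimpleGraph (Fin n)) : Set (SimpleGraph (Fin (n - 1))) :=
  {H | ∃ v : Fin n, H = erase G v}

/-- The shadow `∂𝒢` of a collection of ordered graphs. -/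
def shadowCol {n : ℕ} (𝒢 : Set (SimpleGraph (Fin n))) : Set (SimpleGraph (Fin (n - 1))) :=
  ⋃ G ∈ 𝒢, shadow G

/-- `x ∼ y` : the relation `Γ(x) \ {y} = Γ(y) \ {x}`. -/
def simRel {n : ℕ} (G : SimpleGraph (Fin n)) (x y : Fin n) : Prop :=
  G.neighborSet x \ {y} = G.neighborSet y \ {x}

/-- A set of consecutive vertices whose elements are pairwise `∼`-equivalent. -/
def IsHomInterval {n : ℕ} (G : SimpleGraph (Fin n)) (B : Set (Fin n)) : Prop :=
  B.OrdConnected ∧ ∀ x ∈ B, ∀ y ∈ B, simRel G x y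

/-- A homogeneous block: a maximal nonempty set of consecutive vertices whose elements are
pairwise `∼`-equivalent. -/
def IsHomBlock {n : ℕ} (G : SimpleGraph (Fin n)) (B : Set (Fin n)) : Prop :=
  B.Nonempty ∧ IsHomInterval G B ∧ ∀ C, IsHomInterval G C → B ⊆ C → B = C

open Classical in
/-- The excess `m(G) = Σ_{B : |B| ≥ 3} (|B| − 2)`, the sum over homogeneous blocks;
(truncated ℕ-subtraction makes blocks with `|B| ≤ 2` contribute `0`). -/
noncomputable def excess {n : ℕ} (G : SimpleGraph (Fin n)) : ℕ :=
  ∑ B ∈ Finset.univ.filter (fun B : Finset (Fin n) => IsHomBlock G ↑B), (B.card - 2)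

/-- Two ordered graphs have the same type. -/
def SameType {n n' : ℕ} (G : SimpleGraph (Fin n)) (G' : SimpleGraph (Fin n')) : Prop :=
  ∃ (k : ℕ) (B : Fin k → Set (Fin n)) (B' : Fin k → Set (Fin n')),
    (∀ i, IsHomBlock G (B i)) ∧ (∀ C, IsHomBlock G C → ∃ i, C = B i) ∧
    (∀ i j : Fin k, i < j → ∀ x ∈ B i, ∀ y ∈ B j, x < y) ∧
    (∀ i, IsHomBlock G' (B' i)) ∧ (∀ C, IsHomBlock G' C → ∃ i, C = B' i) ∧
    (∀ i j : Fin k, i < j → ∀ x ∈ B' i, ∀ y ∈ B' j, x < y) ∧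
    (∀ i j : Fin k, (∀ u ∈ B i, ∀ v ∈ B j, u ≠ v → G.Adj u v) ↔
            (∀ u ∈ B' i, ∀ v ∈ B' j, u ≠ v → G'.Adj u v)) ∧
    (∀ i, (B i).ncard = 1 ↔ (B' i).ncard = 1)

/-- The shadow within types `∂_τ G`. -/
def typeShadow {n : ℕ} (G : SimpleGraph (Fin n)) : Set (SimpleGraph (Fin (n - 1))) :=
  {H ∈ shadow G | SameType H G}

/-- The shadow within types `∂_τ 𝒢` of a collection. -/
def typeShadowCol {n : ℕ} (𝒢 : Set (SimpleGraph (Fin n))) : Set (SimpleGraph (Fin (n - 1))) :=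
  ⋃ G ∈ 𝒢, typeShadow G

/-- `Z^d(n) = {x ∈ ℤ^d : x_i ≥ 0, Σ_i x_i = n}`. -/
def Zdn (d n : ℕ) : Set (Fin d → ℤ) := {x | (∀ i, 0 ≤ x i) ∧ ∑ i, x i = (n : ℤ)}

/-- A line in `Z^d(n)`, determined by two coordinates `j, k`. -/
def ZLine (d n : ℕ) (j k : Fin d) : Set (Fin d → ℤ) :=
  {x ∈ Zdn d n | ∀ i, i ≠ j → i ≠ k → x i = 0}

/-- The shadow of a subset `A ⊆ Z^d(n)`. -/
def Zshadow (d n : ℕ) (A : Set (Fin d → ℤ)) : Set (Fin d → ℤ) :=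
  {x ∈ Zdn d (n - 1) | ∃ y ∈ A, ∀ i, x i ≤ y i}

/-- `phiAt G d x` : `x ∈ ℤ^d` is the image `φ(G)` of `G`, i.e. the homogeneous blocks of `G`
of size at least `2`, in increasing order, are `B_1 < ⋯ < B_d` and `x i = |B_i| − 2`. -/
def phiAt {n : ℕ} (G : SimpleGraph (Fin n)) (d : ℕ) (x : Fin d → ℤ) : Prop :=
  ∃ B : Fin d → Set (Fin n),
    (∀ i, IsHomBlock G (B i) ∧ 2 ≤ (B i).ncard) ∧
    (∀ C, IsHomBlock G C → 2 ≤ C.ncard → ∃ i, C = B i) ∧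
    (∀ i j : Fin d, i < j → ∀ u ∈ B i, ∀ v ∈ B j, u < v) ∧
    (∀ i, x i = ((B i).ncard : ℤ) - 2)

/-- `𝒢₀` (a set of ordered graphs of a common type, of common excess `m`) contains a line:
some subset `S ⊆ 𝒢₀` has `φ(S)` equal to a line in `Z^d(m)`. -/
def ContainsLine {n : ℕ} (𝒢₀ : Set (SimpleGraph (Fin n))) (m : ℕ) : Prop :=
  ∃ S ⊆ 𝒢₀, ∃ (d : ℕ) (j k : Fin d),
    {x : Fin d → ℤ | ∃ G ∈ S, phiAt G d x} = ZLine d m j k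

/-- `eraseSet G X` is `G − X`: delete all vertices of `X` and relabel order-preservingly. -/
noncomputable def eraseSet {n : ℕ} (G : SimpleGraph (Fin n)) (X : Finset (Fin n)) :
    SimpleGraph (Fin (n - X.card)) where
  Adj i j := G.Adj ((Xᶜ.orderIsoOfFin (by rw [Finset.card_compl, Fintype.card_fin]) i) : Fin n)
                   ((Xᶜ.orderIsoOfFin (by rw [Finset.card_compl, Fintype.card_fin]) j) : Fin n)
  symm := ⟨fun i j h => G.adj_symm h⟩
  loopless := ⟨fun i h => G.irrefl h⟩

/-- A semi-homogeneous block: a set `B` of consecutive vertices such that all vertices of `B`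
have the same neighbourhood outside `B`, and, for some `L ⊆ ℕ`, two vertices `x, y ∈ B` are
adjacent iff `|x − y| ∈ L`. -/
def IsSemiHomBlock {n : ℕ} (G : SimpleGraph (Fin n)) (B : Set (Fin n)) : Prop :=
  B.OrdConnected ∧
  (∀ x ∈ B, ∀ y ∈ B, G.neighborSet x \ B = G.neighborSet y \ B) ∧
  ∃ L : Set ℕ, ∀ x ∈ B, ∀ y ∈ B, (G.Adj x y ↔ ((x : ℤ) - (y : ℤ)).natAbs ∈ L)

/-! Read a graph on `Fin n` as a graph on `ℕ` and write `skip v : ℕ → ℕ` for the increasing map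
missing `v`, so that `G − v` is the pullback of `G` along `skip v`. For `a < b`, `G − a = G − b`
says that shifting `[a, b)` up by one is an isomorphism `G − b ≅ G − a`: every vertex outside
`[a, b]` sees `[a, b]` uniformly, and adjacency inside `[a, b]` depends only on the difference of
the two vertices. If moreover `G − a = G − c` with `b < c`, the vertices of `(b, c]` force this
difference pattern to be constant, so `[a, c]` is a homogeneous interval. Conversely all vertices of
a homogeneous interval have the same deletion. Hence every fibre of `a ↦ G − a` with at least three
elements lies in a homogeneous block `B`, distinct fibres in distinct blocks, and such a fibre has
at most `2 + (|B| - 2)` elements. -/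

def Twins {V : Type*} (G : SimpleGraph V) (x y : V) : Prop :=
  ∀ z, z ≠ x → z ≠ y → (G.Adj x z ↔ G.Adj y z)

def skip (v i : ℕ) : ℕ := if i < v then i else i + 1

lemma skip_of_lt {v i : ℕ} (h : i < v) : skip v i = i := if_pos h

lemma skip_of_le {v i : ℕ} (h : v ≤ i) : skip v i = i + 1 := if_neg (Nat.not_lt.2 h)

section SkipEq

variable {Γ : SimpleGraph ℕ} {a b : ℕ}

lemma adj_skip_iff_of_comap_eq (h : Γ.comap (skip a) = Γ.comap (skip b)) (i j : ℕ) :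
    Γ.Adj (skip a i) (skip a j) ↔ Γ.Adj (skip b i) (skip b j) := by
  rw [← SimpleGraph.comap_adj, h, SimpleGraph.comap_adj]

lemma adj_succ_iff_of_comap_skip_eq (h : Γ.comap (skip a) = Γ.comap (skip b)) {z x : ℕ}
    (hz : z < a ∨ b < z) (hax : a ≤ x) (hxb : x < b) : Γ.Adj z (x + 1) ↔ Γ.Adj z x := by
  obtain ⟨i, hia, hib⟩ : ∃ i, skip a i = z ∧ skip b i = z := by
    rcases hz with hz | hz
    · exact ⟨z, skip_of_lt hz, skip_of_lt (by omega)⟩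
    · exact ⟨z - 1, by rw [skip_of_le (by omega)]; omega, by rw [skip_of_le (by omega)]; omega⟩
  simpa only [hia, hib, skip_of_le hax, skip_of_lt hxb] using adj_skip_iff_of_comap_eq h i x

lemma adj_succ_succ_iff_of_comap_skip_eq (h : Γ.comap (skip a) = Γ.comap (skip b)) {x y : ℕ}
    (hax : a ≤ x) (hxb : x < b) (hay : a ≤ y) (hyb : y < b) :
    Γ.Adj (x + 1) (y + 1) ↔ Γ.Adj x y := by
  simpa only [skip_of_le hax, skip_of_lt hxb, skip_of_le hay, skip_of_lt hyb]
    using adj_skip_iff_of_comap_eq h x y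

lemma adj_iff_adj_of_comap_skip_eq (h : Γ.comap (skip a) = Γ.comap (skip b)) {z x y : ℕ}
    (hz : z < a ∨ b < z) (hax : a ≤ x) (hxy : x ≤ y) (hyb : y ≤ b) :
    Γ.Adj z x ↔ Γ.Adj z y := by
  induction y, hxy using Nat.le_induction with
  | base => rfl
  | succ y _ ih => exact (ih (by omega)).trans (adj_succ_iff_of_comap_skip_eq h hz (by omega) hyb).symm

lemma adj_add_add_iff_of_comap_skip_eq (h : Γ.comap (skip a) = Γ.comap (skip b)) {x y : ℕ}
    (hax : a ≤ x) (hay : a ≤ y) (k : ℕ) (hxb : x + k ≤ b) (hyb : y + k ≤ b) :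
    Γ.Adj (x + k) (y + k) ↔ Γ.Adj x y := by
  induction k with
  | zero => rfl
  | succ k ih =>
    exact (adj_succ_succ_iff_of_comap_skip_eq h (x := x + k) (y := y + k) (by omega) (by omega)
      (by omega) (by omega)).trans (ih (by omega) (by omega))

end SkipEq

section ThreeDeletions

variable {Γ : SimpleGraph ℕ} {a b c : ℕ}

lemma adj_add_succ_iff_of_comap_skip_eq (hab : a < b) (hbc : b < c)
    (h₁ : Γ.comap (skip a) = Γ.comap (skip b)) (h₂ : Γ.comap (skip a) = Γ.comap (skip c))
    {d : ℕ} (hd : 1 ≤ d) (hdc : d + 1 ≤ c - a) :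
    Γ.Adj a (a + d + 1) ↔ Γ.Adj a (a + d) := by
  set z := min (b + d) c with hz
  set x := z - d - 1 with hx
  have e₁ : Γ.Adj x z ↔ Γ.Adj a (a + d + 1) := by
    convert adj_add_add_iff_of_comap_skip_eq h₂ le_rfl (Nat.le_add_right a (d + 1)) (x - a)
      (by omega) (by omega) using 2 <;> omega
  have e₂ : Γ.Adj (x + 1) z ↔ Γ.Adj a (a + d) := by
    convert adj_add_add_iff_of_comap_skip_eq h₂ le_rfl (Nat.le_add_right a d) (x + 1 - a)
      (by omega) (by omega) using 2 <;> omega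
  rw [← e₁, ← e₂, Γ.adj_comm x, Γ.adj_comm (x + 1)]
  refine (adj_succ_iff_of_comap_skip_eq h₁ (Or.inr ?_) ?_ ?_).symm <;> omega

lemma adj_iff_adj_succ_of_comap_skip_eq (hab : a < b) (hbc : b < c)
    (h₁ : Γ.comap (skip a) = Γ.comap (skip b)) (h₂ : Γ.comap (skip a) = Γ.comap (skip c))
    {p q : ℕ} (hap : a ≤ p) (hpc : p ≤ c) (haq : a ≤ q) (hqc : q ≤ c) (hpq : p ≠ q) :
    Γ.Adj p q ↔ Γ.Adj a (a + 1) := by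
  wlog hlt : p < q generalizing p q
  · rw [Γ.adj_comm]; exact this haq hqc hap hpc hpq.symm (by omega)
  have htranslate : Γ.Adj p q ↔ Γ.Adj a (a + (q - p)) := by
    convert adj_add_add_iff_of_comap_skip_eq h₂ le_rfl (Nat.le_add_right a (q - p)) (p - a)
      (by omega) (by omega) using 2 <;> omega
  rw [htranslate]
  have hconst : ∀ d, 1 ≤ d → d ≤ c - a → (Γ.Adj a (a + d) ↔ Γ.Adj a (a + 1)) := by
    intro d hd hdc
    induction d, hd using Nat.le_induction with
    | base => rfl
    | succ d hd ih =>
      exact (adj_add_succ_iff_of_comap_skip_eq hab hbc h₁ h₂ hd hdc).trans (ih (by omega))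
  exact hconst _ (by omega) (by omega)

lemma twins_of_comap_skip_eq (hab : a < b) (hbc : b < c)
    (h₁ : Γ.comap (skip a) = Γ.comap (skip b)) (h₂ : Γ.comap (skip a) = Γ.comap (skip c))
    {x y : ℕ} (hax : a ≤ x) (hxc : x ≤ c) (hay : a ≤ y) (hyc : y ≤ c) : Twins Γ x y := by
  intro z hzx hzy
  by_cases hz : a ≤ z ∧ z ≤ c
  · rw [adj_iff_adj_succ_of_comap_skip_eq hab hbc h₁ h₂ hax hxc hz.1 hz.2 (Ne.symm hzx),
      adj_iff_adj_succ_of_comap_skip_eq hab hbc h₁ h₂ hay hyc hz.1 hz.2 (Ne.symm hzy)]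
  · rw [Γ.adj_comm x, Γ.adj_comm y]
    rcases le_total x y with hxy | hyx
    · exact adj_iff_adj_of_comap_skip_eq h₂ (by omega) hax hxy hyc
    · exact (adj_iff_adj_of_comap_skip_eq h₂ (by omega) hay hyx hxc).symm

end ThreeDeletions

section TwinDeletions

variable {Γ : SimpleGraph ℕ}

lemma comap_skip_eq_comap_skip_succ {x : ℕ} (hx : Twins Γ x (x + 1)) :
    Γ.comap (skip x) = Γ.comap (skip (x + 1)) := by
  have hskip : ∀ i, i ≠ x → skip (x + 1) i = skip x i ∧ skip x i ≠ x ∧ skip x i ≠ x + 1 := by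
    intro i hi; unfold skip; split_ifs <;> omega
  have hx₁ : skip x x = x + 1 := skip_of_le le_rfl
  have hx₂ : skip (x + 1) x = x := skip_of_lt (Nat.lt_succ_self x)
  ext i j
  simp only [SimpleGraph.comap_adj]
  rcases eq_or_ne i x with rfl | hi <;> rcases eq_or_ne j i with rfl | hji
  · simp
  · obtain ⟨hj₁, hj₂, hj₃⟩ := hskip j hji
    rw [hx₁, hx₂, hj₁]
    exact (hx _ hj₂ hj₃).symm
  · simp
  obtain ⟨hi₁, hi₂, hi₃⟩ := hskip i hi
  rcases eq_or_ne j x with rfl | hj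
  · rw [hx₁, hx₂, hi₁, Γ.adj_comm, Γ.adj_comm (skip j i)]
    exact (hx _ hi₂ hi₃).symm
  · rw [hi₁, (hskip j hj).1]

lemma comap_skip_eq_of_twins_succ {a b : ℕ} (hab : a ≤ b)
    (h : ∀ x, a ≤ x → x < b → Twins Γ x (x + 1)) : Γ.comap (skip a) = Γ.comap (skip b) := by
  induction b, hab using Nat.le_induction with
  | base => rfl
  | succ b hab ih =>
    exact (ih fun x hax hxb => h x hax (by omega)).trans
      (comap_skip_eq_comap_skip_succ (h b hab (Nat.lt_succ_self b)))

end TwinDeletions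

lemma twins_map_iff {V W : Type*} (G : SimpleGraph V) (f : V ↪ W) {x y : V} :
    Twins (G.map f) (f x) (f y) ↔ Twins G x y := by
  refine ⟨fun h z hzx hzy => ?_, fun h w hwx hwy => ?_⟩
  · simpa only [SimpleGraph.map_adj_apply] using h (f z) (f.injective.ne hzx) (f.injective.ne hzy)
  · by_cases hw : w ∈ Set.range f
    · obtain ⟨z, rfl⟩ := hw
      simpa only [SimpleGraph.map_adj_apply] using
        h z (fun hzx => hwx (congrArg f hzx)) (fun hzy => hwy (congrArg f hzy))
    · have hnot : ∀ u, ¬(G.map f).Adj u w := fun u huw => hw <| by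
        obtain ⟨-, v, -, -, rfl⟩ := (SimpleGraph.map_adj f G u w).1 huw
        exact ⟨v, rfl⟩
      simp only [hnot]

variable {n : ℕ} {G : SimpleGraph (Fin n)}

lemma simRel_iff_twins {x y : Fin n} : simRel G x y ↔ Twins G x y := by
  simp only [simRel, Twins, Set.ext_iff, Set.mem_sdiff, SimpleGraph.mem_neighborSet,
    Set.mem_singleton_iff]
  refine forall_congr' fun z => ?_
  by_cases hzx : z = x <;> by_cases hzy : z = y <;> simp_all

lemma val_delMap (v : Fin n) (i : Fin (n - 1)) : (delMap v i : ℕ) = skip v i := by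
  unfold delMap skip; split_ifs <;> rfl

lemma erase_adj_iff {v : Fin n} {i j : Fin (n - 1)} :
    (erase G v).Adj i j ↔ (G.map Fin.valEmbedding).Adj (skip v i) (skip v j) := by
  rw [← val_delMap, ← val_delMap, ← Fin.valEmbedding_apply, SimpleGraph.map_adj_apply]
  rfl

lemma lt_of_map_valEmbedding_adj {p q : ℕ} (h : (G.map Fin.valEmbedding).Adj p q) :
    p < n ∧ q < n := by
  obtain ⟨-, u, v, -, rfl, rfl⟩ := h
  exact ⟨u.isLt, v.isLt⟩

lemma erase_eq_erase_iff {a b : Fin n} :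
    erase G a = erase G b ↔
      (G.map Fin.valEmbedding).comap (skip a) = (G.map Fin.valEmbedding).comap (skip b) := by
  refine ⟨fun h => ?_, fun h => ?_⟩
  · ext i j
    simp only [SimpleGraph.comap_adj]
    by_cases hij : i < n - 1 ∧ j < n - 1
    · have : (erase G a).Adj ⟨i, hij.1⟩ ⟨j, hij.2⟩ ↔ (erase G b).Adj ⟨i, hij.1⟩ ⟨j, hij.2⟩ := by
        rw [h]
      simpa only [erase_adj_iff] using this
    · have hbig : ∀ (v : Fin n) k, n - 1 ≤ k → n ≤ skip v k := fun v k hk => by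
        rw [skip_of_le (by omega)]; omega
      have hfalse : ∀ v : Fin n, ¬(G.map Fin.valEmbedding).Adj (skip v i) (skip v j) := by
        intro v hadj
        have := lt_of_map_valEmbedding_adj hadj
        rcases not_and_or.1 hij with hi | hj
        · have := hbig v i (by omega); omega
        · have := hbig v j (by omega); omega
      simp only [hfalse]
  · ext i j
    rw [erase_adj_iff, erase_adj_iff]
    exact adj_skip_iff_of_comap_eq h i j

lemma isHomInterval_Icc_of_erase_eq {a b c : Fin n} (hab : a < b) (hbc : b < c)
    (h₁ : erase G a = erase G b) (h₂ : erase G a = erase G c) : IsHomInterval G (Set.Icc a c) :=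
  ⟨Set.ordConnected_Icc, fun _ hx _ hy => simRel_iff_twins.2 <|
    (twins_map_iff G Fin.valEmbedding).1 <| twins_of_comap_skip_eq hab hbc
      (erase_eq_erase_iff.1 h₁) (erase_eq_erase_iff.1 h₂) hx.1 hx.2 hy.1 hy.2⟩

lemma erase_eq_of_isHomInterval {B : Set (Fin n)} (hB : IsHomInterval G B) {x y : Fin n}
    (hx : x ∈ B) (hy : y ∈ B) : erase G x = erase G y := by
  wlog hxy : x ≤ y generalizing x y
  · exact (this hy hx (le_of_not_ge hxy)).symm
  rw [erase_eq_erase_iff]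
  refine comap_skip_eq_of_twins_succ hxy fun k hxk hky => ?_
  have hk : k + 1 < n := by omega
  have hmem : ∀ u : Fin n, x ≤ u → u ≤ y → u ∈ B := fun u h₁ h₂ => hB.1.out hx hy ⟨h₁, h₂⟩
  exact (twins_map_iff G Fin.valEmbedding (x := ⟨k, by omega⟩) (y := ⟨k + 1, hk⟩)).2 <|
    simRel_iff_twins.1 <| hB.2 _ (hmem _ hxk hky.le) _ (hmem _ (Nat.le_succ_of_le hxk) hky)

lemma exists_isHomBlock_superset {S : Set (Fin n)} (hS : IsHomInterval G S)
    (hne : S.Nonempty) : ∃ B : Finset (Fin n), IsHomBlock G B ∧ S ⊆ B := by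
  classical
  obtain ⟨B, hSB, hB⟩ := Finite.exists_le_maximal (p := IsHomInterval G) hS
  refine ⟨B.toFinset, ?_, ?_⟩ <;> rw [Set.coe_toFinset]
  · exact ⟨hne.mono hSB, hB.1, fun C hC hBC => hBC.antisymm (hB.2 hC hBC)⟩
  · exact hSB

lemma exists_isHomBlock_superset_of_erase_eq {F : Finset (Fin n)} (hF : 2 < F.card)
    (h : ∀ a ∈ F, ∀ b ∈ F, erase G a = erase G b) :
    ∃ B : Finset (Fin n), IsHomBlock G B ∧ F ⊆ B := by
  have hne : F.Nonempty := Finset.card_pos.1 (by omega)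
  set a := F.min' hne
  set c := F.max' hne
  have ha : a ∈ F := F.min'_mem hne
  have hc : c ∈ F := F.max'_mem hne
  obtain ⟨b, hb⟩ : ((F.erase a).erase c).Nonempty := by
    refine Finset.card_pos.1 ?_
    have := Finset.pred_card_le_card_erase (s := F.erase a) (a := c)
    have := Finset.pred_card_le_card_erase (s := F) (a := a)
    omega
  simp only [Finset.mem_erase] at hb
  obtain ⟨hb_ne_c, hb_ne_a, hb⟩ := hb
  have hab : a < b := lt_of_le_of_ne (F.min'_le b hb) (Ne.symm hb_ne_a)
  have hbc : b < c := lt_of_le_of_ne (F.le_max' b hb) hb_ne_c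
  obtain ⟨B, hB, hsub⟩ := exists_isHomBlock_superset
    (isHomInterval_Icc_of_erase_eq hab hbc (h a ha b hb) (h a ha c hc))
    ⟨a, Set.left_mem_Icc.2 (hab.le.trans hbc.le)⟩
  exact ⟨B, hB, Finset.coe_subset.1 fun x hx => hsub ⟨F.min'_le x hx, F.le_max' x hx⟩⟩

open Classical in
lemma sum_card_fiber_sub_two_le_excess (A : Finset (Fin n)) :
    ∑ H ∈ A.image (erase G), ((A.filter (erase G · = H)).card - 2) ≤ excess G := by
  set fiber := fun H => A.filter (erase G · = H)
  have hblock : ∀ H, ∃ B : Finset (Fin n), 2 < (fiber H).card → IsHomBlock G B ∧ fiber H ⊆ B := by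
    intro H
    by_cases hH : 2 < (fiber H).card
    · obtain ⟨B, hB, hsub⟩ := exists_isHomBlock_superset_of_erase_eq hH fun a ha b hb =>
        (Finset.mem_filter.1 ha).2.trans (Finset.mem_filter.1 hb).2.symm
      exact ⟨B, fun _ => ⟨hB, hsub⟩⟩
    · exact ⟨∅, fun h => absurd h hH⟩
  choose β hβ using hblock
  set T := (A.image (erase G)).filter (fun H => 2 < (fiber H).card)
  have hinj : Set.InjOn β T := by
    intro H₁ hH₁ H₂ hH₂ hβH
    rw [Finset.mem_coe, Finset.mem_filter] at hH₁ hH₂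
    obtain ⟨a₁, ha₁⟩ := Finset.card_pos.1 (by omega : 0 < (fiber H₁).card)
    obtain ⟨a₂, ha₂⟩ := Finset.card_pos.1 (by omega : 0 < (fiber H₂).card)
    have h₁ : a₁ ∈ (β H₁ : Set (Fin n)) := (hβ H₁ hH₁.2).2 ha₁
    have h₂ : a₂ ∈ (β H₁ : Set (Fin n)) := hβH ▸ (hβ H₂ hH₂.2).2 ha₂
    rw [← (Finset.mem_filter.1 ha₁).2, ← (Finset.mem_filter.1 ha₂).2]
    exact erase_eq_of_isHomInterval (hβ H₁ hH₁.2).1.2.1 h₁ h₂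
  calc ∑ H ∈ A.image (erase G), ((fiber H).card - 2)
      = ∑ H ∈ T, ((fiber H).card - 2) := (Finset.sum_filter_of_ne fun H _ h => by omega).symm
    _ ≤ ∑ H ∈ T, ((β H).card - 2) := Finset.sum_le_sum fun H hH =>
        Nat.sub_le_sub_right (Finset.card_le_card (hβ H (Finset.mem_filter.1 hH).2).2) 2
    _ = ∑ B ∈ T.image β, (B.card - 2) := (Finset.sum_image (f := fun B => B.card - 2) hinj).symm
    _ ≤ excess G := Finset.sum_le_sum_of_subset <| Finset.image_subset_iff.2 fun H hH =>
        Finset.mem_filter.2 ⟨Finset.mem_univ _, (hβ H (Finset.mem_filter.1 hH).2).1⟩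

open Classical in
lemma card_le_two_mul_card_image_erase_add_excess (A : Finset (Fin n)) :
    A.card ≤ 2 * (A.image (erase G)).card + excess G :=
  calc A.card = ∑ H ∈ A.image (erase G), (A.filter (erase G · = H)).card :=
        Finset.card_eq_sum_card_image _ _
    _ ≤ ∑ H ∈ A.image (erase G), (2 + ((A.filter (erase G · = H)).card - 2)) :=
        Finset.sum_le_sum fun _ _ => by omega
    _ = 2 * (A.image (erase G)).card +
          ∑ H ∈ A.image (erase G), ((A.filter (erase G · = H)).card - 2) := by
        rw [Finset.sum_add_distrib, Finset.sum_const, smul_eq_mul, mul_comm]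
    _ ≤ 2 * (A.image (erase G)).card + excess G :=
        Nat.add_le_add_left (sum_card_fiber_sub_two_le_excess A) _

/-- **Lemma.** For an ordered graph `G` on `[n]` and `A ⊆ [n]`, the number of distinct
ordered graphs of the form `G − a` with `a ∈ A` is at least `(|A| − m(G)) / 2`. -/
theorem erase_card_lower (n : ℕ) (G : SimpleGraph (Fin n)) (A : Set (Fin n)) :
    ((A.ncard : ℝ) - (excess G : ℝ)) / 2 ≤
      (({H | ∃ a ∈ A, H = erase G a}).ncard : ℝ) := by
  classical
  have hshadow : {H | ∃ a ∈ A, H = erase G a} = ↑(A.toFinset.image (erase G)) := by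
    ext H
    simp [eq_comm]
  rw [hshadow, Set.ncard_coe_finset, Set.ncard_eq_toFinset_card']
  have hcount : (A.toFinset.card : ℝ) ≤ 2 * (A.toFinset.image (erase G)).card + excess G := by
    exact_mod_cast card_le_two_mul_card_image_erase_add_excess A.toFinset
  linarith

end OrderedGraphs
end

section
/- Let G and H be ordered graphs on [n], let a_1, a_2, a_3, a_4 ∈ [n] with a_1 < a_2 < a_3 < a_4, and let b_1, b_2, b_3, b_4 ∈ [n] be pairwise distinct with a_4 ≤ b_i for each i ∈ [4]. If G − a_i = H − b_i for each i ∈ [4], then the interval [a_2,a_3] = {w : a_2 ≤ w ≤ a_3} is homogeneous in G, i.e. all its vertices are pairwise ∼-equivalent (so [a_2,a_3] is contained in a single homogeneous block of G). -/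
/-!
Each equation `G − aᵢ = H − bᵢ` identifies the vertices of `G` other than `aᵢ` with those of
`H` other than `bᵢ`. Composing two of them gives a partial automorphism of `G`: for `i ∈ {1, 2}`
and `j ∈ {3, 4}` it moves every `x ∈ (a₂, a₃]` to `x − 1`, fixes the vertices below `aᵢ`, and
fixes each vertex above `aⱼ` that does not lie between `bᵢ` and `bⱼ`. So `x − 1` and `x` see
every `w` outside `[a₂, a₃]` alike, unless `w` separates `{b₁, b₂}` from `{b₃, b₄}`. In that
case, and for `w` inside `[a₂, a₃]`, other combinations move adjacencies along diagonals or
anti-diagonals of the adjacency matrix; propagating along them shows that whether `z` and `w` are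
adjacent does not depend on `z ∈ [a₂, a₃]`.
-/

namespace OrderedGraphs

section

variable {n : ℕ}

theorem iff_of_forall_iff_succ {P : ℕ → Prop} {l r : ℕ} (hlr : l ≤ r)
    (h : ∀ t, l ≤ t → t < r → (P t ↔ P (t + 1))) : P l ↔ P r := by
  induction r, hlr using Nat.le_induction with
  | base => rfl
  | succ r hlr ih => exact (ih fun t h₁ h₂ => h t h₁ (by omega)).trans (h r hlr (by omega))

/-- `G.Adj` on positions in `ℕ`, false out of range, so that index arithmetic needs no bounds. -/
def NatAdj (G : SimpleGraph (Fin n)) (x y : ℕ) : Prop :=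
  ∃ (hx : x < n) (hy : y < n), G.Adj ⟨x, hx⟩ ⟨y, hy⟩

variable {G H : SimpleGraph (Fin n)}

@[simp]
theorem natAdj_val_iff (x y : Fin n) : NatAdj G x y ↔ G.Adj x y :=
  ⟨fun ⟨_, _, h⟩ => h, fun h => ⟨x.isLt, y.isLt, h⟩⟩

theorem natAdj_comm {x y : ℕ} : NatAdj G x y ↔ NatAdj G y x :=
  ⟨fun ⟨hx, hy, h⟩ => ⟨hy, hx, h.symm⟩, fun ⟨hy, hx, h⟩ => ⟨hx, hy, h.symm⟩⟩

theorem delMap_val (v : Fin n) (i : Fin (n - 1)) :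
    (delMap v i : ℕ) = if (i : ℕ) < v then (i : ℕ) else i + 1 := by
  unfold delMap; split <;> rfl

/-- Vertex `x` of `G` and vertex `u` of `H` are the same vertex of `G − a` and `H − b`. -/
def Corresponds (a b : Fin n) (x u : ℕ) : Prop :=
  x < n ∧ ((x < a ∧ x < b ∧ u = x) ∨ (a < x ∧ x ≤ b ∧ u + 1 = x) ∨ (a < x ∧ b < x ∧ u = x))

theorem exists_delMap_of_corresponds {a b : Fin n} {x u : ℕ} (h : Corresponds a b x u) :
    ∃ i : Fin (n - 1), (delMap a i : ℕ) = x ∧ (delMap b i : ℕ) = u := by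
  obtain ⟨hx, ⟨h₁, h₂, rfl⟩ | ⟨h₁, h₂, rfl⟩ | ⟨h₁, h₂, rfl⟩⟩ := h
  · refine ⟨⟨u, by omega⟩, ?_, ?_⟩ <;> simp only [delMap_val] <;> split_ifs <;> omega
  · refine ⟨⟨u, by omega⟩, ?_, ?_⟩ <;> simp only [delMap_val] <;> split_ifs <;> omega
  · refine ⟨⟨u - 1, by omega⟩, ?_, ?_⟩ <;> simp only [delMap_val] <;> split_ifs <;> omega

theorem natAdj_iff_of_corresponds {a b : Fin n}
    (e : erase G a = erase H b) {x y u v : ℕ} (hx : Corresponds a b x u)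
    (hy : Corresponds a b y v) : NatAdj G x y ↔ NatAdj H u v := by
  obtain ⟨i, rfl, rfl⟩ := exists_delMap_of_corresponds hx
  obtain ⟨j, rfl, rfl⟩ := exists_delMap_of_corresponds hy
  simp only [natAdj_val_iff]
  exact Iff.of_eq (congrArg (fun K : SimpleGraph (Fin (n - 1)) => K.Adj i j) e)

theorem natAdj_iff_natAdj_of_corresponds {a b a' b' : Fin n}
    (e : erase G a = erase H b) (e' : erase G a' = erase H b') {x y x' y' : ℕ} (u v : ℕ)
    (hx : Corresponds a b x u) (hy : Corresponds a b y v)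
    (hx' : Corresponds a' b' x' u) (hy' : Corresponds a' b' y' v) :
    NatAdj G x y ↔ NatAdj G x' y' :=
  (natAdj_iff_of_corresponds e hx hy).trans (natAdj_iff_of_corresponds e' hx' hy').symm

theorem natAdj_pred_iff {a b a' b' : Fin n} (e : erase G a = erase H b)
    (e' : erase G a' = erase H b') {x w : ℕ} (hx : a < x) (hxa' : x ≤ a') (hb : a' ≤ b)
    (hb' : a' ≤ b') (hw : w < a ∨ a' < w) (hwb : w ≤ b ↔ w ≤ b') (hwn : w < n) :
    NatAdj G x w ↔ NatAdj G (x - 1) w := by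
  obtain ⟨u, hu, hu'⟩ : ∃ u, Corresponds a b w u ∧ Corresponds a' b' w u := by
    by_cases h : a' < w ∧ w ≤ b
    · exact ⟨w - 1, by unfold Corresponds; omega, by unfold Corresponds; omega⟩
    · exact ⟨w, by unfold Corresponds; omega, by unfold Corresponds; omega⟩
  exact natAdj_iff_natAdj_of_corresponds e e' (x - 1) u
    (by unfold Corresponds; omega) hu (by unfold Corresponds; omega) hu'

theorem natAdj_iff_of_mem_Icc {a₁ a₂ a₃ b₁ b₂ b₃ : Fin n}
    (e₁ : erase G a₁ = erase H b₁) (e₂ : erase G a₂ = erase H b₂)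
    (e₃ : erase G a₃ = erase H b₃) (h₁₂ : a₁ < a₂) (h₂₃ : a₂ < a₃)
    (hb₁ : a₃ ≤ b₁) (hb₂ : a₃ ≤ b₂) (hb₃ : a₃ ≤ b₃) {x y : ℕ}
    (hx : a₂ ≤ x) (hx' : x ≤ a₃) (hy : a₂ ≤ y) (hy' : y ≤ a₃) (hxy : x ≠ y) :
    NatAdj G x y ↔ NatAdj G a₂ a₁ := by
  have hcol : ∀ z : ℕ, a₂ ≤ z → z < a₃ → (NatAdj G z a₁ ↔ NatAdj G (z + 1) a₁) := by
    intro z h h'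
    refine natAdj_iff_natAdj_of_corresponds e₃ e₂ z a₁ ?_ ?_ ?_ ?_ <;> unfold Corresponds <;> omega
  have hrow : ∀ z : ℕ, a₂ < z → z ≤ a₃ → ∀ t : ℕ, a₁ ≤ t → t < a₂ →
      (NatAdj G z t ↔ NatAdj G z (t + 1)) := by
    intro z h h' t ht ht'
    refine natAdj_iff_natAdj_of_corresponds e₂ e₁ (z - 1) t ?_ ?_ ?_ ?_ <;>
      unfold Corresponds <;> omega
  have hdiag : ∀ z v : ℕ, a₂ ≤ v → v < z → z < a₃ →
      (NatAdj G z v ↔ NatAdj G (z + 1) (v + 1)) := by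
    intro z v h h' h''
    refine natAdj_iff_natAdj_of_corresponds e₃ e₂ z v ?_ ?_ ?_ ?_ <;> unfold Corresponds <;> omega
  have hbelow : ∀ v : ℕ, a₂ ≤ v → ∀ z : ℕ, v < z → z ≤ a₃ → (NatAdj G z v ↔ NatAdj G a₂ a₁) := by
    intro v hv
    induction v, hv using Nat.le_induction with
    | base =>
      intro z h h'
      calc NatAdj G z a₂ ↔ NatAdj G z a₁ :=
            (iff_of_forall_iff_succ h₁₂.le (hrow z h h')).symm
        _ ↔ NatAdj G a₂ a₁ :=
            (iff_of_forall_iff_succ h.le fun t ht ht' => hcol t ht (by omega)).symm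
    | succ v hv ih =>
      intro z h h'
      have := hdiag (z - 1) v (by omega) (by omega) (by omega)
      rw [Nat.sub_add_cancel (by omega)] at this
      exact this.symm.trans (ih (z - 1) (by omega) (by omega))
  rcases hxy.lt_or_gt with h | h
  · exact natAdj_comm.trans (hbelow x hx y h hy')
  · exact hbelow y hy x h hx'

theorem natAdj_iff_of_left_lt_right {a b a' b' a₃ b₃ a₄ b₄ : Fin n}
    (e : erase G a = erase H b) (e' : erase G a' = erase H b')
    (e₃ : erase G a₃ = erase H b₃) (e₄ : erase G a₄ = erase H b₄) {s : Fin n} {μ : ℕ}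
    (ha : a ≤ s) (ha' : a' ≤ s) (hs : s ≤ a₃) (h₃₄ : a₃ < a₄) (hb : a₄ ≤ b)
    (hbb' : b < b')
    (hμ : b' ≤ μ) (hμ₃ : μ ≤ b₃) (hμ₄ : μ ≤ b₄) :
    ∀ z : ℕ, s ≤ z → z ≤ a₃ → ∀ v : ℕ, b' ≤ v → v ≤ μ → (NatAdj G z v ↔ NatAdj G a₄ μ) := by
  have hcol : ∀ z : ℕ, s ≤ z → z < a₃ → (NatAdj G z b' ↔ NatAdj G (z + 1) b') := by
    intro z h h'
    refine natAdj_iff_natAdj_of_corresponds e₄ e' z (b' - 1) ?_ ?_ ?_ ?_ <;>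
      unfold Corresponds <;> omega
  have hcols : ∀ v : ℕ, b' ≤ v → v ≤ μ → ∀ t : ℕ, a₃ ≤ t → t < a₄ →
      (NatAdj G v t ↔ NatAdj G v (t + 1)) := by
    intro v h h' t ht ht'
    refine natAdj_iff_natAdj_of_corresponds e₄ e₃ (v - 1) t ?_ ?_ ?_ ?_ <;>
      unfold Corresponds <;> omega
  have hrow : ∀ v : ℕ, b' ≤ v → v < μ → (NatAdj G a₄ v ↔ NatAdj G a₄ (v + 1)) := by
    intro v h h'
    refine natAdj_iff_natAdj_of_corresponds e e₃ (a₄ - 1) v ?_ ?_ ?_ ?_ <;>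
      unfold Corresponds <;> omega
  have hanti : ∀ z v : ℕ, s ≤ z → z < a₃ → b' ≤ v → v < μ →
      (NatAdj G z (v + 1) ↔ NatAdj G (z + 1) v) := by
    intro z v h h' hv hv'
    refine natAdj_iff_natAdj_of_corresponds e₃ e z v ?_ ?_ ?_ ?_ <;> unfold Corresponds <;> omega
  have htop : ∀ v : ℕ, b' ≤ v → v ≤ μ → (NatAdj G a₃ v ↔ NatAdj G a₄ μ) := by
    intro v h h'
    calc NatAdj G a₃ v ↔ NatAdj G v a₃ := natAdj_comm
      _ ↔ NatAdj G v a₄ := iff_of_forall_iff_succ h₃₄.le (hcols v h h')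
      _ ↔ NatAdj G a₄ v := natAdj_comm
      _ ↔ NatAdj G a₄ μ := iff_of_forall_iff_succ h' fun t ht ht' => hrow t (by omega) ht'
  intro z hz hz'
  refine Nat.decreasingInduction' (fun k hk hzk ih v hv hv' => ?_) hz' htop
  rcases hv.eq_or_lt with rfl | hv
  · exact (hcol k (by omega) hk).trans (ih _ le_rfl hμ)
  · have := hanti k (v - 1) (by omega) hk (by omega) (by omega)
    rw [Nat.sub_add_cancel (by omega)] at this
    exact this.trans (ih (v - 1) (by omega) (by omega))

theorem natAdj_iff_of_right_lt_left {a b a' b' a₃ b₃ a₄ b₄ : Fin n}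
    (e : erase G a = erase H b) (e' : erase G a' = erase H b')
    (e₃ : erase G a₃ = erase H b₃) (e₄ : erase G a₄ = erase H b₄) {s : Fin n} {ν : ℕ}
    (ha : a ≤ s) (ha' : a' ≤ s) (hs : s ≤ a₃) (h₃₄ : a₃ < a₄) (hb₃ : a₄ ≤ b₃) (hb₄ : a₄ ≤ b₄)
    (hν₃ : b₃ ≤ ν) (hν₄ : b₄ ≤ ν) (hν : ν < b) (hbb' : b < b') :
    ∀ z : ℕ, s ≤ z → z ≤ a₃ → ∀ v : ℕ, ν < v → v ≤ b + 1 → (NatAdj G z v ↔ NatAdj G a₄ b) := by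
  have hcols : ∀ v : ℕ, ν < v → v ≤ b → ∀ t : ℕ, a₃ ≤ t → t < a₄ →
      (NatAdj G v t ↔ NatAdj G v (t + 1)) := by
    intro v h h' t ht ht'
    refine natAdj_iff_natAdj_of_corresponds e₄ e₃ v t ?_ ?_ ?_ ?_ <;> unfold Corresponds <;> omega
  have hrow : ∀ v : ℕ, ν < v → v < b → (NatAdj G a₄ v ↔ NatAdj G a₄ (v + 1)) := by
    intro v h h'
    refine natAdj_iff_natAdj_of_corresponds e₃ e (a₄ - 1) v ?_ ?_ ?_ ?_ <;>
      unfold Corresponds <;> omega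
  have hcorner : ∀ z : ℕ, s ≤ z → z ≤ a₃ → (NatAdj G z (b + 1) ↔ NatAdj G (z + 1) (b + 1)) := by
    intro z h h'
    refine natAdj_iff_natAdj_of_corresponds e₄ e z (b + 1) ?_ ?_ ?_ ?_ <;>
      unfold Corresponds <;> omega
  have hdiag : ∀ z v : ℕ, s ≤ z → z ≤ a₃ → ν < v → v ≤ b →
      (NatAdj G z v ↔ NatAdj G (z + 1) (v + 1)) := by
    intro z v h h' hv hv'
    refine natAdj_iff_natAdj_of_corresponds e₄ e' z v ?_ ?_ ?_ ?_ <;> unfold Corresponds <;> omega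
  have htop' : ∀ v : ℕ, ν < v → v ≤ b → (NatAdj G a₃ v ↔ NatAdj G a₄ b) := by
    intro v h h'
    calc NatAdj G a₃ v ↔ NatAdj G v a₃ := natAdj_comm
      _ ↔ NatAdj G v a₄ := iff_of_forall_iff_succ h₃₄.le (hcols v h h')
      _ ↔ NatAdj G a₄ v := natAdj_comm
      _ ↔ NatAdj G a₄ b := iff_of_forall_iff_succ h' fun t ht ht' => hrow t (by omega) ht'
  have htop : ∀ v : ℕ, ν < v → v ≤ b + 1 → (NatAdj G a₃ v ↔ NatAdj G a₄ b) := by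
    intro v h h'
    rcases h'.lt_or_eq with h' | rfl
    · exact htop' v h (by omega)
    · calc NatAdj G a₃ (b + 1) ↔ NatAdj G (a₃ + 1) (b + 1) := hcorner a₃ hs le_rfl
        _ ↔ NatAdj G a₃ b := (hdiag a₃ b hs le_rfl hν le_rfl).symm
        _ ↔ NatAdj G a₄ b := htop' b hν le_rfl
  intro z hz hz'
  refine Nat.decreasingInduction' (fun k hk hzk ih v hv hv' => ?_) hz' htop
  rcases hv'.lt_or_eq with hv' | rfl
  · exact (hdiag k v (by omega) hk.le hv (by omega)).trans (ih (v + 1) (by omega) (by omega))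
  · exact (hcorner k (by omega) hk.le).trans (ih _ (by omega) le_rfl)

theorem natAdj_pred_iff_of_lt_or_lt {a₁ a₂ a₃ a₄ b₁ b₂ b₃ b₄ : Fin n}
    (e₁ : erase G a₁ = erase H b₁) (e₂ : erase G a₂ = erase H b₂)
    (e₃ : erase G a₃ = erase H b₃) (e₄ : erase G a₄ = erase H b₄)
    (h₁₂ : a₁ < a₂) (h₂₃ : a₂ < a₃) (h₃₄ : a₃ < a₄) (hb₁₂ : b₁ ≠ b₂)
    (hb₁ : a₄ ≤ b₁) (hb₂ : a₄ ≤ b₂) (hb₃ : a₄ ≤ b₃) (hb₄ : a₄ ≤ b₄) {x w : ℕ}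
    (hx : a₂ < x) (hx' : x ≤ a₃) (hw : w < a₂ ∨ a₃ < w) (hwn : w < n) :
    NatAdj G x w ↔ NatAdj G (x - 1) w := by
  rcases hw with hw | hw
  · exact natAdj_pred_iff e₂ e₃ hx hx' (by omega) (by omega) (Or.inl hw) (by omega) hwn
  by_cases hw₁₃ : w ≤ b₁ ↔ w ≤ b₃
  · exact natAdj_pred_iff e₁ e₃ (by omega) hx' (by omega) (by omega) (Or.inr hw) hw₁₃ hwn
  by_cases hw₁₄ : w ≤ b₁ ↔ w ≤ b₄
  · exact natAdj_pred_iff e₁ e₄ (by omega) (by omega) hb₁ hb₄ (by omega) hw₁₄ hwn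
  by_cases hw₂₃ : w ≤ b₂ ↔ w ≤ b₃
  · exact natAdj_pred_iff e₂ e₃ hx hx' (by omega) (by omega) (Or.inr hw) hw₂₃ hwn
  by_cases hw₂₄ : w ≤ b₂ ↔ w ≤ b₄
  · exact natAdj_pred_iff e₂ e₄ hx (by omega) hb₂ hb₄ (by omega) hw₂₄ hwn
  -- `w` separates `{b₁, b₂}` from `{b₃, b₄}`
  suffices ∃ c : Prop, ∀ z : ℕ, a₂ ≤ z → z ≤ a₃ → (NatAdj G z w ↔ c) by
    obtain ⟨c, hc⟩ := this
    exact (hc x (by omega) hx').trans (hc (x - 1) (by omega) (by omega)).symm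
  rcases hb₁₂.lt_or_gt with hb | hb <;> by_cases hwb : w ≤ b₁
  · exact ⟨_, fun z hz hz' => natAdj_iff_of_right_lt_left e₁ e₂ e₃ e₄ h₁₂.le le_rfl h₂₃.le h₃₄
      hb₃ hb₄ (ν := w - 1) (by omega) (by omega) (by omega) hb z hz hz' w (by omega)
      (by omega)⟩
  · exact ⟨_, fun z hz hz' => natAdj_iff_of_left_lt_right e₁ e₂ e₃ e₄ h₁₂.le le_rfl h₂₃.le h₃₄
      hb₁ hb (μ := w) (by omega) (by omega) (by omega) z hz hz' w (by omega) le_rfl⟩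
  · exact ⟨_, fun z hz hz' => natAdj_iff_of_right_lt_left e₂ e₁ e₃ e₄ le_rfl h₁₂.le h₂₃.le h₃₄
      hb₃ hb₄ (ν := w - 1) (by omega) (by omega) (by omega) hb z hz hz' w (by omega)
      (by omega)⟩
  · exact ⟨_, fun z hz hz' => natAdj_iff_of_left_lt_right e₂ e₁ e₃ e₄ le_rfl h₁₂.le h₂₃.le h₃₄
      hb₂ hb (μ := w) (by omega) (by omega) (by omega) z hz hz' w (by omega) le_rfl⟩

theorem simRel_of_forall_adj_iff {x y : Fin n}
    (h : ∀ w, w ≠ x → w ≠ y → (G.Adj x w ↔ G.Adj y w)) : simRel G x y := by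
  unfold simRel
  ext w
  simp only [Set.mem_sdiff, SimpleGraph.mem_neighborSet, Set.mem_singleton_iff]
  constructor
  · rintro ⟨hxw, hwy⟩
    exact ⟨(h w hxw.ne' hwy).1 hxw, hxw.ne'⟩
  · rintro ⟨hyw, hwx⟩
    exact ⟨(h w hwx hyw.ne').2 hyw, hyw.ne'⟩

end

/-- **Lemma (four in a row).** If `a₁ < a₂ < a₃ < a₄`, the `bᵢ` are pairwise distinct with
`a₄ ≤ bᵢ`, and `G − aᵢ = H − bᵢ` for each `i`, then the interval `[a₂, a₃]` is homogeneous
in `G` (all its vertices are pairwise `∼`-equivalent). -/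
theorem four_in_a_row (n : ℕ) (G H : SimpleGraph (Fin n)) (a₁ a₂ a₃ a₄ b₁ b₂ b₃ b₄ : Fin n)
    (ha₁ : a₁ < a₂) (ha₂ : a₂ < a₃) (ha₃ : a₃ < a₄)
    (hb : b₁ ≠ b₂ ∧ b₁ ≠ b₃ ∧ b₁ ≠ b₄ ∧ b₂ ≠ b₃ ∧ b₂ ≠ b₄ ∧ b₃ ≠ b₄)
    (hab : a₄ ≤ b₁ ∧ a₄ ≤ b₂ ∧ a₄ ≤ b₃ ∧ a₄ ≤ b₄)
    (e₁ : erase G a₁ = erase H b₁) (e₂ : erase G a₂ = erase H b₂)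
    (e₃ : erase G a₃ = erase H b₃) (e₄ : erase G a₄ = erase H b₄) :
    ∀ x ∈ Set.Icc a₂ a₃, ∀ y ∈ Set.Icc a₂ a₃, simRel G x y := by
  obtain ⟨hb₁₂, -⟩ := hb
  obtain ⟨hb₁, hb₂, hb₃, hb₄⟩ := hab
  intro x ⟨hx, hx'⟩ y ⟨hy, hy'⟩
  refine simRel_of_forall_adj_iff fun w hwx hwy => ?_
  simp only [← natAdj_val_iff]
  by_cases hw : a₂ ≤ w ∧ w ≤ a₃
  · have hinside := fun (u : Fin n) (hu : a₂ ≤ u) (hu' : u ≤ a₃) (huw : u ≠ w) =>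
      natAdj_iff_of_mem_Icc e₁ e₂ e₃ ha₁ ha₂ (ha₃.le.trans hb₁) (ha₃.le.trans hb₂)
        (ha₃.le.trans hb₃) hu hu' hw.1 hw.2 (Fin.val_ne_of_ne huw)
    exact (hinside x hx hx' hwx.symm).trans (hinside y hy hy' hwy.symm).symm
  · have hstep : ∀ z : ℕ, a₂ ≤ z → z < a₃ → (NatAdj G z w ↔ NatAdj G (z + 1) w) :=
      fun z hz hz' => (natAdj_pred_iff_of_lt_or_lt e₁ e₂ e₃ e₄ ha₁ ha₂ ha₃ hb₁₂ hb₁ hb₂ hb₃ hb₄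
        (x := z + 1) (by omega) hz' (by omega) w.isLt).symm
    exact (iff_of_forall_iff_succ hx' fun z hz hz' => hstep z (by omega) hz').trans
      (iff_of_forall_iff_succ hy' fun z hz hz' => hstep z (by omega) hz').symm

end OrderedGraphs
end
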